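/- Let D⊆F₄⁺ be an orthogonal non-singular rook placement and let ξ₁, ξ₂ : D→ℂ∖{0} be distinct maps. Then the associated coadjoint orbits do not coincide: Ω_{D,ξ₁} ≠ Ω_{D,ξ₂}. -/

import Mathlib

open scoped RealInnerProductSpace

/-- The standard basis vectors `ε₁, ε₂, ε₃, ε₄` of `ℝ⁴` (indexed by `Fin 4`). -/
noncomputable def eps (i : Fin 4) : EuclideanSpace ℝ (Fin 4) := EuclideanSpace.single i 1

/-- The set of positive roots of the root system `F₄`:
`{εᵢ} ∪ {εᵢ−εⱼ, εᵢ+εⱼ : i<j} ∪ {(ε₁±ε₂±ε₃±ε₄)/2}`. -/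
noncomputable def F4pos : Set (EuclideanSpace ℝ (Fin 4)) :=
  {v | (∃ i, v = eps i) ∨
       (∃ i j : Fin 4, i < j ∧ (v = eps i - eps j ∨ v = eps i + eps j)) ∨
       (∃ s : Fin 4 → ℝ, s 0 = 1 ∧ (∀ k, s k = 1 ∨ s k = -1) ∧
          v = (1/2 : ℝ) • ∑ k, s k • eps k)}

/-- The simple roots `α₁ = ε₂−ε₃`, `α₂ = ε₃−ε₄`, `α₃ = ε₄`, `α₄ = (ε₁−ε₂−ε₃−ε₄)/2` of `F₄`. -/
noncomputable def sroot : Fin 4 → EuclideanSpace ℝ (Fin 4) :=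
  ![eps 1 - eps 2, eps 2 - eps 3, eps 3, (1/2 : ℝ) • (eps 0 - eps 1 - eps 2 - eps 3)]

/-- The full root system `F₄ = F₄⁺ ∪ (−F₄⁺)`. -/
def F4all : Set (EuclideanSpace ℝ (Fin 4)) := {v | v ∈ F4pos ∨ -v ∈ F4pos}

/-- The exponential of a (nilpotent) endomorphism, as a finite sum. -/
noncomputable def expNil {M : Type*} [AddCommGroup M] [Module ℂ M] (A : Module.End ℂ M) :
    Module.End ℂ M :=
  ∑ k ∈ Finset.range (nilpotencyClass A), (k.factorial : ℂ)⁻¹ • A ^ k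

/-- The coadjoint orbit of a linear form `f ∈ 𝔫*`: all `f ∘ exp(−ad x)`, `x ∈ 𝔫`. -/
noncomputable def orbitOf {n : Type*} [LieRing n] [LieAlgebra ℂ n] (f : Module.Dual ℂ n) :
    Set (Module.Dual ℂ n) :=
  {lam | ∃ x : n, lam = f.comp (expNil (-(LieAlgebra.ad ℂ n x)))}

/-- `x ≤ y` iff `y − x` is a (possibly empty) sum of positive roots of `F₄`. -/
def rootLE (x y : EuclideanSpace ℝ (Fin 4)) : Prop :=
  ∃ M : Multiset (EuclideanSpace ℝ (Fin 4)), (∀ g ∈ M, g ∈ F4pos) ∧ y - x = M.sum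

/-- `x < y` iff `x ≤ y` and `x ≠ y`. -/
def rootLT (x y : EuclideanSpace ℝ (Fin 4)) : Prop := rootLE x y ∧ x ≠ y

/-!
If `f₂ = f₁ ∘ exp(A)` with `A = -ad x`, expand `f₂ (e_m) = ∑ₖ f₁ (Aᵏ e_m) / k!`. Since `ad` maps
`e_m` into the span of the `e_ν` with `ν - m` a positive root, one shows by descending induction
on `m` (along the weight `wt`, which strictly increases) that `f₁ (Aᵏ e_m) = 0` for all `k ≥ 1`.
For `k ≥ 2` this is the induction hypothesis applied to `A e_m`. For `k = 1`: if `m ∈ D`, then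
`f₁ (A e_m)` only sees roots `ν = m + γ`, and these are not in `D` by non-singularity; if `m ∉ D`,
then `0 = f₂ (e_m) = f₁ (e_m) + f₁ (A e_m) = f₁ (A e_m)`. Hence `f₂ = f₁` on the basis, and the
orbits of two forms supported on `D` coincide only when the forms do.
-/

section ExpNil

variable {M : Type*} [AddCommGroup M] [Module ℂ M]

lemma expNil_eq_sum_range {A : Module.End ℂ M} {N : ℕ} (hN : A ^ N = 0) :
    expNil A = ∑ k ∈ Finset.range N, (k.factorial : ℂ)⁻¹ • A ^ k := by
  refine Finset.sum_subset (Finset.range_subset_range.2 (Nat.sInf_le hN)) fun k _ hk => ?_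
  rw [Finset.mem_range, not_lt] at hk
  rw [pow_eq_zero_of_le hk (pow_nilpotencyClass ⟨N, hN⟩), smul_zero]

@[simp]
lemma expNil_zero : expNil (0 : Module.End ℂ M) = 1 := by
  rw [expNil_eq_sum_range (pow_one (0 : Module.End ℂ M)), Finset.sum_range_one]
  simp

lemma apply_expNil_apply_of_forall_pow_add_two {A : Module.End ℂ M} (hA : IsNilpotent A)
    (f : Module.Dual ℂ M) {v : M} (hv : ∀ k, f ((A ^ (k + 2)) v) = 0) :
    f (expNil A v) = f v + f (A v) := by
  obtain ⟨N, hN⟩ := hA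
  rw [expNil_eq_sum_range (pow_eq_zero_of_le (N.le_add_right 2) hN), LinearMap.sum_apply,
    map_sum, Finset.sum_range_succ', Finset.sum_range_succ', Finset.sum_eq_zero fun k _ => by
      rw [LinearMap.smul_apply, map_smul]; exact (congrArg _ (hv k)).trans (smul_zero _)]
  simp [add_comm]

end ExpNil

lemma mem_orbitOf_self {n : Type*} [LieRing n] [LieAlgebra ℂ n] (f : Module.Dual ℂ n) :
    f ∈ orbitOf f :=
  ⟨0, by rw [map_zero, neg_zero, expNil_zero]; rfl⟩

lemma sum_smul_coord_apply_basis {ι R M : Type*} [CommRing R] [AddCommGroup M] [Module R M]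
    [DecidableEq ι] (e : Module.Basis ι R M) (D : Finset ι) (ξ : ι → R) (m : ι) :
    (∑ γ ∈ D, ξ γ • e.coord γ) (e m) = if m ∈ D then ξ m else 0 := by
  simp [Finsupp.single_apply]

section RaisingBasis

variable {ι R L : Type*} [CommRing R] [LieRing L] [LieAlgebra R L] (e : Module.Basis ι R L)

lemma lie_mem_of_forall_basis {S : Submodule R L} {z : L} (h : ∀ i, ⁅e i, z⁆ ∈ S) (y : L) :
    ⁅y, z⁆ ∈ S := by
  induction e.mem_span y using Submodule.span_induction with
  | mem _ hx => obtain ⟨i, rfl⟩ := hx; exact h i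
  | zero => rw [zero_lie]; exact S.zero_mem
  | add _ _ _ _ hx hy => rw [add_lie]; exact S.add_mem hx hy
  | smul a _ _ hx => rw [smul_lie]; exact S.smul_mem a hx

lemma apply_lie_eq_zero_of_forall_basis {r : ι → ι → Prop} {m : ι}
    (hraise : ∀ i, ⁅e i, e m⁆ ∈ Submodule.span R (e '' {ν | r m ν}))
    {f : Module.Dual R L} (hf : ∀ ν, r m ν → f (e ν) = 0) (y : L) : f ⁅y, e m⁆ = 0 := by
  have hle : Submodule.span R (e '' {ν | r m ν}) ≤ LinearMap.ker f :=
    Submodule.span_le.2 fun _ ⟨ν, hν, hv⟩ => hv ▸ hf ν hν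
  exact hle (lie_mem_of_forall_basis e hraise y)

end RaisingBasis

theorem eq_of_mem_orbitOf_of_support {ι n : Type*} [LieRing n] [LieAlgebra ℂ n]
    (e : Module.Basis ι ℂ n) {r : ι → ι → Prop} (hwf : WellFounded (flip r))
    (hraise : ∀ i m, ⁅e i, e m⁆ ∈ Submodule.span ℂ (e '' {ν | r m ν}))
    (hnil : ∀ x : n, IsNilpotent (LieAlgebra.ad ℂ n x))
    {D : Set ι} (hD : ∀ m ∈ D, ∀ ν, r m ν → ν ∉ D)
    {f₁ f₂ : Module.Dual ℂ n} (h₁ : ∀ m ∉ D, f₁ (e m) = 0) (h₂ : ∀ m ∉ D, f₂ (e m) = 0)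
    (h : f₂ ∈ orbitOf f₁) : f₂ = f₁ := by
  obtain ⟨x, rfl⟩ := h
  set A : Module.End ℂ n := -LieAlgebra.ad ℂ n x
  have hA : IsNilpotent A := (hnil x).neg
  have hAe : ∀ (f : Module.Dual ℂ n) m, f (A (e m)) = -f ⁅x, e m⁆ := fun f _ => map_neg f _
  have key : ∀ m k, f₁ ((A ^ (k + 1)) (e m)) = 0 := by
    intro m
    induction m using hwf.induction with
    | _ m IH =>
      have higher : ∀ k, f₁ ((A ^ (k + 2)) (e m)) = 0 := fun k => by
        rw [pow_succ, Module.End.mul_apply, ← LinearMap.comp_apply, hAe,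
          apply_lie_eq_zero_of_forall_basis e (hraise · m) (fun ν hν => IH ν hν k) x, neg_zero]
      rintro (_ | k)
      · rw [pow_one]
        by_cases hm : m ∈ D
        · rw [hAe, apply_lie_eq_zero_of_forall_basis e (hraise · m)
            (fun ν hν => h₁ ν (hD m hm ν hν)) x, neg_zero]
        · have := apply_expNil_apply_of_forall_pow_add_two hA f₁ higher
          rwa [← LinearMap.comp_apply, h₂ m hm, h₁ m hm, zero_add, eq_comm] at this
      · exact higher k
  refine e.ext fun m => ?_
  rw [LinearMap.comp_apply, apply_expNil_apply_of_forall_pow_add_two hA f₁ (fun k => key m (k + 1)),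
    ← pow_one A, key m 0, add_zero]

lemma wellFounded_flip_of_bounded_weight {α : Type*} {r : α → α → Prop} (w : α → ℝ) {B : ℝ}
    (hB : ∀ a, w a ≤ B) (hr : ∀ a b, r a b → w a + 1 ≤ w b) : WellFounded (flip r) := by
  refine Subrelation.wf (fun {a b} hab => ?_) (InvImage.wf (fun a => ⌈B - w a⌉₊) wellFounded_lt)
  have hlt : (⌈B - w a⌉₊ : ℝ) < ⌈B - w b⌉₊ := calc
    (⌈B - w a⌉₊ : ℝ) < B - w a + 1 := Nat.ceil_lt_add_one (by linarith [hB a])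
    _ ≤ B - w b := by linarith [hr b a hab]
    _ ≤ ⌈B - w b⌉₊ := Nat.le_ceil _
  exact Nat.cast_lt.1 hlt

-- Positive on `F₄⁺` and bounded there, so it strictly increases along `IsRootStep`.
noncomputable def wt : EuclideanSpace ℝ (Fin 4) →ₗ[ℝ] ℝ where
  toFun v := 16 * v 0 + 8 * v 1 + 4 * v 2 + 2 * v 3
  map_add' a b := by simp only [PiLp.add_apply]; ring
  map_smul' c a := by simp only [PiLp.smul_apply, smul_eq_mul, RingHom.id_apply]; ring

lemma wt_eps (i : Fin 4) : wt (eps i) = ![16, 8, 4, 2] i := by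
  fin_cases i <;> simp [wt, eps]

lemma wt_mem_Icc_of_mem_F4pos {v : EuclideanSpace ℝ (Fin 4)} (hv : v ∈ F4pos) :
    wt v ∈ Set.Icc 1 24 := by
  obtain (⟨i, rfl⟩ | ⟨i, j, hij, (rfl | rfl)⟩ | ⟨s, hs0, hs, rfl⟩) := hv
  · fin_cases i <;> norm_num [wt_eps]
  · fin_cases i <;> fin_cases j <;> first | exact absurd hij (by decide) | norm_num [wt_eps]
  · fin_cases i <;> fin_cases j <;> first | exact absurd hij (by decide) | norm_num [wt_eps]
  · rw [map_smul, map_sum, Fin.sum_univ_four]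
    simp only [map_smul, wt_eps, smul_eq_mul, hs0]
    rcases hs 1 with h1 | h1 <;> rcases hs 2 with h2 | h2 <;> rcases hs 3 with h3 | h3 <;>
      norm_num [h1, h2, h3, Matrix.cons_val_two, Matrix.cons_val_three]

lemma notMem_F4pos_of_wt_lt_one {v : EuclideanSpace ℝ (Fin 4)} (hv : wt v < 1) : v ∉ F4pos :=
  fun h => (wt_mem_Icc_of_mem_F4pos h).1.not_gt hv

lemma add_notMem_F4all_of_notMem_F4pos {γ δ : EuclideanSpace ℝ (Fin 4)} (hγ : γ ∈ F4pos)
    (hδ : δ ∈ F4pos) (h : γ + δ ∉ F4pos) : γ + δ ∉ F4all := by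
  refine fun h' => h'.elim h (notMem_F4pos_of_wt_lt_one ?_)
  rw [map_neg, map_add]
  linarith [(wt_mem_Icc_of_mem_F4pos hγ).1, (wt_mem_Icc_of_mem_F4pos hδ).1]

lemma add_ne_zero_of_mem_F4pos {γ δ : EuclideanSpace ℝ (Fin 4)} (hγ : γ ∈ F4pos)
    (hδ : δ ∈ F4pos) : γ + δ ≠ 0 := by
  intro h
  have h₀ := congrArg wt h
  rw [map_add, map_zero] at h₀
  linarith [(wt_mem_Icc_of_mem_F4pos hγ).1, (wt_mem_Icc_of_mem_F4pos hδ).1]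

def IsRootStep (m ν : F4pos) : Prop := (ν : EuclideanSpace ℝ (Fin 4)) - m ∈ F4pos

lemma wellFounded_flip_isRootStep : WellFounded (flip IsRootStep) := by
  refine wellFounded_flip_of_bounded_weight (fun m : F4pos => wt m)
    (fun m => (wt_mem_Icc_of_mem_F4pos m.2).2) fun m ν h => ?_
  have := (wt_mem_Icc_of_mem_F4pos h).1
  rw [map_sub] at this
  linarith

lemma notMem_of_isRootStep {D : Finset F4pos}
    (hns : ∀ γ ∈ D, ∀ δ ∈ D, (γ : EuclideanSpace ℝ (Fin 4)) ≠ δ →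
      (γ : EuclideanSpace ℝ (Fin 4)) - (δ : EuclideanSpace ℝ (Fin 4)) ∉ F4pos)
    {m ν : F4pos} (hm : m ∈ D) (h : IsRootStep m ν) : ν ∉ D := by
  refine fun hν => hns ν hν m hm (fun hνm => notMem_F4pos_of_wt_lt_one ?_ h) h
  rw [hνm, sub_self, map_zero]
  exact one_pos

lemma lie_mem_span_isRootStep {n : Type*} [LieRing n] [LieAlgebra ℂ n]
    (e : Module.Basis F4pos ℂ n)
    (hbr_add : ∀ γ m : F4pos, ∀ h : (γ : EuclideanSpace ℝ (Fin 4)) + m ∈ F4pos,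
      ∃ c : ℂ, ⁅e γ, e m⁆ = c • e ⟨_, h⟩)
    (hzero : ∀ γ m : F4pos, (γ : EuclideanSpace ℝ (Fin 4)) + m ∉ F4pos → ⁅e γ, e m⁆ = 0)
    (γ m : F4pos) : ⁅e γ, e m⁆ ∈ Submodule.span ℂ (e '' {ν | IsRootStep m ν}) := by
  by_cases h : (γ : EuclideanSpace ℝ (Fin 4)) + m ∈ F4pos
  · obtain ⟨c, hc⟩ := hbr_add γ m h
    have hstep : IsRootStep m ⟨_, h⟩ := by
      show (γ : EuclideanSpace ℝ (Fin 4)) + m - m ∈ F4pos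
      rw [add_sub_cancel_right]
      exact γ.2
    rw [hc]
    exact Submodule.smul_mem _ c (Submodule.subset_span ⟨_, hstep, rfl⟩)
  · rw [hzero γ m h]
    exact zero_mem _

theorem stmt17_general
    -- the simple complex Lie algebra `𝔤` of type `F₄`, with a Chevalley-type basis
    -- `{h₁,…,h₄} ∪ {e_γ : γ ∈ F₄}`: here `h i = b (Sum.inl i)` and `e_γ = b (Sum.inr γ)`
    {g : Type*} [LieRing g] [LieAlgebra ℂ g]
    (b : Module.Basis (Fin 4 ⊕ F4all) ℂ g)
    (N : F4all → F4all → ℂ)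
    (hNbr : ∀ γ δ : F4all, ∀ h : (γ : EuclideanSpace ℝ (Fin 4)) + δ ∈ F4all,
      ⁅b (Sum.inr γ), b (Sum.inr δ)⁆ =
        N γ δ • b (Sum.inr ⟨(γ : EuclideanSpace ℝ (Fin 4)) + δ, h⟩))
    (hzero : ∀ γ δ : F4all,
      (γ : EuclideanSpace ℝ (Fin 4)) + (δ : EuclideanSpace ℝ (Fin 4)) ∉ F4all →
      (γ : EuclideanSpace ℝ (Fin 4)) + (δ : EuclideanSpace ℝ (Fin 4)) ≠ 0 →
      ⁅b (Sum.inr γ), b (Sum.inr δ)⁆ = 0)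
    -- `𝔫 = span{e_γ : γ ∈ F₄⁺}` is the nilpotent subalgebra of `𝔤` spanned by the
    -- positive root vectors; we realize it as a Lie algebra `n` with basis `(e_γ)_{γ∈F₄⁺}`
    -- embedded in `𝔤` via `ι`
    {n : Type*} [LieRing n] [LieAlgebra ℂ n]
    (e : Module.Basis F4pos ℂ n)
    (ι : n →ₗ⁅ℂ⁆ g) (hinj : Function.Injective ι)
    (hιe : ∀ γ : F4pos,
      ι (e γ) = b (Sum.inr ⟨(γ : EuclideanSpace ℝ (Fin 4)), Or.inl γ.2⟩))
    (hnil : ∀ x : n, IsNilpotent (LieAlgebra.ad ℂ n x))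
    (D : Finset F4pos)
    -- `D` is an orthogonal non-singular rook placement
    (hns : ∀ γ ∈ D, ∀ δ ∈ D, (γ : EuclideanSpace ℝ (Fin 4)) ≠ δ →
      (γ : EuclideanSpace ℝ (Fin 4)) - (δ : EuclideanSpace ℝ (Fin 4)) ∉ F4pos)
    (ξ₁ ξ₂ : F4pos → ℂ)
    -- the maps `ξ₁, ξ₂ : D → ℂˣ` are distinct
    (hne : ∃ γ ∈ D, ξ₁ γ ≠ ξ₂ γ) :
    orbitOf (∑ γ ∈ D, ξ₁ γ • e.coord γ) ≠ orbitOf (∑ γ ∈ D, ξ₂ γ • e.coord γ) := by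
  classical
  have hbr_add : ∀ γ m : F4pos, ∀ h : (γ : EuclideanSpace ℝ (Fin 4)) + m ∈ F4pos,
      ∃ c : ℂ, ⁅e γ, e m⁆ = c • e ⟨_, h⟩ := fun γ m h =>
    ⟨N _ _, hinj <| by rw [LieHom.map_lie, hιe, hιe, map_smul, hιe]; exact hNbr _ _ (Or.inl h)⟩
  have hbr_zero : ∀ γ m : F4pos, (γ : EuclideanSpace ℝ (Fin 4)) + m ∉ F4pos → ⁅e γ, e m⁆ = 0 :=
    fun γ m h => hinj <| by
      rw [LieHom.map_lie, hιe, hιe, map_zero]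
      exact hzero _ _ (add_notMem_F4all_of_notMem_F4pos γ.2 m.2 h)
        (add_ne_zero_of_mem_F4pos γ.2 m.2)
  intro hEq
  have h := eq_of_mem_orbitOf_of_support e wellFounded_flip_isRootStep
    (lie_mem_span_isRootStep e hbr_add hbr_zero) hnil (D := ↑D)
    (fun m hm ν => notMem_of_isRootStep hns hm)
    (fun m hm => (sum_smul_coord_apply_basis e D _ m).trans (if_neg hm))
    (fun m hm => (sum_smul_coord_apply_basis e D _ m).trans (if_neg hm)) (hEq ▸ mem_orbitOf_self _)
  obtain ⟨δ, hδ, hne⟩ := hne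
  have hδval := LinearMap.congr_fun h (e δ)
  rw [sum_smul_coord_apply_basis, sum_smul_coord_apply_basis, if_pos hδ, if_pos hδ] at hδval
  exact hne hδval

theorem stmt17
    -- the simple complex Lie algebra `𝔤` of type `F₄`, with a Chevalley-type basis
    -- `{h₁,…,h₄} ∪ {e_γ : γ ∈ F₄}`: here `h i = b (Sum.inl i)` and `e_γ = b (Sum.inr γ)`
    {g : Type*} [LieRing g] [LieAlgebra ℂ g]
    (b : Module.Basis (Fin 4 ⊕ F4all) ℂ g)
    (hHH : ∀ i j : Fin 4, ⁅b (Sum.inl i), b (Sum.inl j)⁆ = 0)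
    (hHE : ∀ (i : Fin 4) (γ : F4all), ⁅b (Sum.inl i), b (Sum.inr γ)⁆ =
      ((2 * ⟪(γ : EuclideanSpace ℝ (Fin 4)), sroot i⟫ / ⟪sroot i, sroot i⟫ : ℝ) : ℂ) •
        b (Sum.inr γ))
    (N : F4all → F4all → ℂ)
    (hNbr : ∀ γ δ : F4all, ∀ h : (γ : EuclideanSpace ℝ (Fin 4)) + δ ∈ F4all,
      ⁅b (Sum.inr γ), b (Sum.inr δ)⁆ =
        N γ δ • b (Sum.inr ⟨(γ : EuclideanSpace ℝ (Fin 4)) + δ, h⟩))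
    (hN0 : ∀ γ δ : F4all,
      (γ : EuclideanSpace ℝ (Fin 4)) + (δ : EuclideanSpace ℝ (Fin 4)) ∈ F4all → N γ δ ≠ 0)
    -- `[e_γ, e_{−γ}]` lies in the span of the `hᵢ` and acts on each `e_δ`
    -- by the scalar `2(δ,γ)/(γ,γ)`
    (hCart : ∀ γ : F4all, ∀ h : -(γ : EuclideanSpace ℝ (Fin 4)) ∈ F4all, ∃ t : Fin 4 → ℂ,
      ⁅b (Sum.inr γ), b (Sum.inr ⟨-(γ : EuclideanSpace ℝ (Fin 4)), h⟩)⁆ =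
        ∑ i, t i • b (Sum.inl i) ∧
      ∀ δ : F4all, ⁅∑ i, t i • b (Sum.inl i), b (Sum.inr δ)⁆ =
        ((2 * ⟪(δ : EuclideanSpace ℝ (Fin 4)), (γ : EuclideanSpace ℝ (Fin 4))⟫ /
            ⟪(γ : EuclideanSpace ℝ (Fin 4)), (γ : EuclideanSpace ℝ (Fin 4))⟫ : ℝ) : ℂ) •
          b (Sum.inr δ))
    (hzero : ∀ γ δ : F4all,
      (γ : EuclideanSpace ℝ (Fin 4)) + (δ : EuclideanSpace ℝ (Fin 4)) ∉ F4all →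
      (γ : EuclideanSpace ℝ (Fin 4)) + (δ : EuclideanSpace ℝ (Fin 4)) ≠ 0 →
      ⁅b (Sum.inr γ), b (Sum.inr δ)⁆ = 0)
    -- `𝔫 = span{e_γ : γ ∈ F₄⁺}` is the nilpotent subalgebra of `𝔤` spanned by the
    -- positive root vectors; we realize it as a Lie algebra `n` with basis `(e_γ)_{γ∈F₄⁺}`
    -- embedded in `𝔤` via `ι`
    {n : Type*} [LieRing n] [LieAlgebra ℂ n]
    (e : Module.Basis F4pos ℂ n)
    (ι : n →ₗ⁅ℂ⁆ g) (hinj : Function.Injective ι)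
    (hιe : ∀ γ : F4pos,
      ι (e γ) = b (Sum.inr ⟨(γ : EuclideanSpace ℝ (Fin 4)), Or.inl γ.2⟩))
    (hnil : ∀ x : n, IsNilpotent (LieAlgebra.ad ℂ n x))
    (D : Finset F4pos)
    -- `D` is an orthogonal non-singular rook placement
    (hrook : ∀ γ ∈ D, ∀ δ ∈ D, (γ : EuclideanSpace ℝ (Fin 4)) ≠ δ →
      ⟪(γ : EuclideanSpace ℝ (Fin 4)), (δ : EuclideanSpace ℝ (Fin 4))⟫ ≤ 0)
    (horth : ∀ γ ∈ D, ∀ δ ∈ D, (γ : EuclideanSpace ℝ (Fin 4)) ≠ δ →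
      ⟪(γ : EuclideanSpace ℝ (Fin 4)), (δ : EuclideanSpace ℝ (Fin 4))⟫ = 0)
    (hns : ∀ γ ∈ D, ∀ δ ∈ D, (γ : EuclideanSpace ℝ (Fin 4)) ≠ δ →
      (γ : EuclideanSpace ℝ (Fin 4)) - (δ : EuclideanSpace ℝ (Fin 4)) ∉ F4pos)
    (ξ₁ ξ₂ : F4pos → ℂ)
    (hξ₁ : ∀ γ ∈ D, ξ₁ γ ≠ 0) (hξ₂ : ∀ γ ∈ D, ξ₂ γ ≠ 0)
    -- the maps `ξ₁, ξ₂ : D → ℂˣ` are distinct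
    (hne : ∃ γ ∈ D, ξ₁ γ ≠ ξ₂ γ) :
    orbitOf (∑ γ ∈ D, ξ₁ γ • e.coord γ) ≠ orbitOf (∑ γ ∈ D, ξ₂ γ • e.coord γ) :=
  stmt17_general b N hNbr hzero e ι hinj hιe hnil D hns ξ₁ ξ₂ hne
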